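/- For every i ∈ {1,…,C}, the maximum of |S ∩ {1,…,i}| over all sets S ⊆ {1,…,C} admitting a feasible assignment equals i − max_{1≤j≤i} max(0, j − V(j)); that is, the maximum number of chunks among the first i chunks that can be fetched by their deadlines is i minus the forward-scan skip count at i. -/

import Mathlib

/-- Cumulative bandwidth of a link up to time `t`: `R(t) = Σ_{j=1}^t B(j)`. -/
noncomputable def cumBW (B : ℕ → ℝ) (t : ℕ) : ℝ := ∑ j ∈ Finset.Icc 1 t, B j

/-- `V(i) = Σ_{u=1}^U ⌊min(η_u, R_u(d(i)))/Y⌋`. -/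
noncomputable def Vval (U : ℕ) (Y : ℝ) (d : ℕ → ℕ) (B : Fin U → ℕ → ℝ)
    (η : Fin U → ℝ) (i : ℕ) : ℕ :=
  ∑ u : Fin U, ⌊min (η u) (cumBW (B u) (d i)) / Y⌋₊

/-- A feasible assignment for a set `S` of chunks: a link choice `ℓ i` and download
amounts `z i j ≥ 0` so that each chunk `i ∈ S` gets its full layer of size `Y` over
link `ℓ i` by its deadline `d i`, respecting per-slot bandwidths and per-link
maximum contributions. -/
def FeasibleAssignment (U : ℕ) (Y : ℝ) (d : ℕ → ℕ) (B : Fin U → ℕ → ℝ)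
    (η : Fin U → ℝ) (S : Finset ℕ) : Prop :=
  ∃ (ℓ : ℕ → Fin U) (z : ℕ → ℕ → ℝ),
    (∀ i ∈ S, ∀ j, 0 ≤ z i j) ∧
    (∀ i ∈ S, ∑ j ∈ Finset.Icc 1 (d i), z i j = Y) ∧
    (∀ i ∈ S, ∀ j, (j < 1 ∨ d i < j) → z i j = 0) ∧
    (∀ u : Fin U, ∀ j, 1 ≤ j →
      ∑ i ∈ S.filter (fun i => ℓ i = u), z i j ≤ B u j) ∧
    (∀ u : Fin U,
      ∑ i ∈ S.filter (fun i => ℓ i = u), ∑ j ∈ Finset.Icc 1 (d i), z i j ≤ η u)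


/-!
A set `S` of chunks is feasible exactly when its prefixes are small: for every `j ∈ S`, at most
`V(j)` chunks of `S` have index `≤ j`. Necessity: those chunks all finish by `d(j)`, so link `u`
carries at most `min(η_u, R_u(d(j))) / Y` of them. Sufficiency: assign the chunks in increasing
order, each to a link that still has room, and let every link serve its chunks one after another,
the chunk with `s` predecessors receiving the bandwidth between cumulative levels `s Y` and
`(s + 1) Y`.

The forward scan skips chunk `j` exactly when the running maximum of `j - V(j)` increases; the
chunks it keeps satisfy the prefix condition and number `i - max_{j ≤ i} (j - V(j))` up to `i`.
Conversely, a feasible set has at most `V(j) + (i - j)` chunks up to `i`, for every `j ≤ i`.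
-/

open Finset

section PrefixCount

variable {α : Type*} [LinearOrder α]

theorem Finset.sum_card_filter_lt {M : Type*} [AddCommMonoid M] (S : Finset α) (f : ℕ → M) :
    ∑ i ∈ S, f (#(S.filter (· < i))) = ∑ k ∈ range #S, f k := by
  induction S using Finset.induction_on_max with
  | empty => simp
  | insert m S hlt ih =>
    have hm : m ∉ S := fun h => (hlt m h).false
    rw [sum_insert hm, card_insert_of_notMem hm, sum_range_succ, add_comm, filter_insert,
      if_neg (lt_irrefl m), filter_true_of_mem hlt, ← ih]
    congr 1
    refine sum_congr rfl fun i hi => ?_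
    rw [filter_insert, if_neg (hlt i hi).not_gt]

theorem Finset.card_filter_le_eq_card_filter_lt_add_one {S : Finset α} {i : α} (hi : i ∈ S) :
    #(S.filter (· ≤ i)) = #(S.filter (· < i)) + 1 := by
  rw [← card_insert_of_notMem (s := S.filter (· < i))
    fun h => lt_irrefl i (mem_filter.1 h).2]
  congr 1
  ext x
  simp only [mem_filter, mem_insert, le_iff_lt_or_eq]
  aesop

theorem Finset.card_filter_le_le_add_sub (S : Finset ℕ) {i j : ℕ} :
    #(S.filter (· ≤ i)) ≤ #(S.filter (· ≤ j)) + (i - j) := by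
  calc #(S.filter (· ≤ i)) ≤ #(S.filter (· ≤ j) ∪ Ioc j i) := by
        refine card_le_card fun k hk => ?_
        obtain ⟨hkS, hki⟩ := mem_filter.1 hk
        rcases le_or_gt k j with hkj | hjk
        · exact mem_union_left _ (mem_filter.2 ⟨hkS, hkj⟩)
        · exact mem_union_right _ (mem_Ioc.2 ⟨hjk, hki⟩)
    _ ≤ #(S.filter (· ≤ j)) + (i - j) := (card_union_le _ _).trans_eq (by rw [Nat.card_Ioc])

def PrefixBounded (S : Finset α) (c : α → ℕ) : Prop :=
  ∀ i ∈ S, #(S.filter (· ≤ i)) ≤ c i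

theorem card_filter_le_insert_max {S : Finset α} {m : α} (hlt : ∀ x ∈ S, x < m) :
    #((insert m S).filter (· ≤ m)) = #S + 1 := by
  rw [filter_true_of_mem fun x hx => ?_, card_insert_of_notMem fun h => (hlt m h).false]
  rcases mem_insert.1 hx with rfl | hx
  exacts [le_rfl, (hlt x hx).le]

theorem PrefixBounded.of_insert_max {S : Finset α} {m : α} {c : α → ℕ}
    (hlt : ∀ x ∈ S, x < m) (h : PrefixBounded (insert m S) c) : PrefixBounded S c :=
  fun i hi => by
    simpa [filter_insert, (hlt i hi).not_ge] using h i (mem_insert_of_mem hi)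

theorem PrefixBounded.insert_max {S : Finset α} {m : α} {c : α → ℕ}
    (hlt : ∀ x ∈ S, x < m) (h : PrefixBounded S c) (hm : #S < c m) :
    PrefixBounded (insert m S) c := by
  intro i hi
  rcases mem_insert.1 hi with rfl | hi
  · rw [card_filter_le_insert_max hlt]
    exact hm
  · rw [filter_insert, if_neg (hlt i hi).not_ge]
    exact h i hi

theorem PrefixBounded.exists_fiberwise {ι : Type*} [Fintype ι] [Nonempty ι] [DecidableEq ι]
    {S : Finset α} {c : ι → α → ℕ} (hS : PrefixBounded S fun i => ∑ u, c u i) :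
    ∃ ℓ : α → ι, ∀ u, PrefixBounded (S.filter (ℓ · = u)) (c u) := by
  induction S using Finset.induction_on_max with
  | empty => exact ⟨fun _ => Classical.arbitrary ι, fun u i hi => by simp at hi⟩
  | insert m S hlt ih =>
    obtain ⟨ℓ, hℓ⟩ := ih (hS.of_insert_max hlt)
    have hroom : ∑ u, #(S.filter (ℓ · = u)) < ∑ u, c u m := by
      rw [← card_eq_sum_card_fiberwise fun x _ => mem_univ (ℓ x)]
      exact (card_filter_le_insert_max hlt).symm.trans_le (hS m (mem_insert_self m S))
    obtain ⟨v, -, hv⟩ := exists_lt_of_sum_lt hroom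
    have hm : m ∉ S := fun h => (hlt m h).false
    refine ⟨Function.update ℓ m v, fun u => ?_⟩
    have hfiber : S.filter (Function.update ℓ m v · = u) = S.filter (ℓ · = u) :=
      filter_congr fun x hx => by rw [Function.update_of_ne (ne_of_mem_of_not_mem hx hm)]
    rw [filter_insert, Function.update_self, hfiber]
    split_ifs with hvu
    · subst hvu
      exact (hℓ v).insert_max (fun x hx => hlt x (mem_filter.1 hx).1) hv
    · exact hℓ u

end PrefixCount

section SkipCount

variable (V : ℕ → ℕ)

def skipCount (i : ℕ) : ℕ :=
  (Icc 1 i).sup fun j => j - V j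

def keptChunks (i : ℕ) : Finset ℕ :=
  (Icc 1 i).filter fun j => skipCount V j = skipCount V (j - 1)

theorem skipCount_succ (k : ℕ) :
    skipCount V (k + 1) = max (k + 1 - V (k + 1)) (skipCount V k) := by
  rw [skipCount, ← insert_Icc_right_eq_Icc_add_one (by omega), sup_insert]
  rfl

theorem skipCount_le_self (k : ℕ) : skipCount V k ≤ k :=
  Finset.sup_le fun j hj => by
    have := (mem_Icc.1 hj).2
    omega

theorem sub_le_skipCount (k : ℕ) : k - V k ≤ skipCount V k := by
  cases k with
  | zero => simp
  | succ k => exact (skipCount_succ V k).ge.trans' (le_max_left _ _)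

theorem skipCount_mono : Monotone (skipCount V) :=
  fun _ _ h => sup_mono (Icc_subset_Icc_right h)

variable {V}

theorem skipCount_succ_le (hV : Monotone V) (k : ℕ) :
    skipCount V (k + 1) ≤ skipCount V k + 1 := by
  have h₁ := sub_le_skipCount V k
  have h₂ : V k ≤ V (k + 1) := hV (by omega)
  rw [skipCount_succ]
  omega

theorem filter_keptChunks {i j : ℕ} (hji : j ≤ i) :
    (keptChunks V i).filter (· ≤ j) = keptChunks V j := by
  ext k
  simp only [keptChunks, mem_filter, mem_Icc]
  constructor
  · rintro ⟨⟨⟨hk, -⟩, hkeep⟩, hkj⟩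
    exact ⟨⟨hk, hkj⟩, hkeep⟩
  · rintro ⟨⟨hk, hkj⟩, hkeep⟩
    exact ⟨⟨⟨hk, hkj.trans hji⟩, hkeep⟩, hkj⟩

theorem card_keptChunks (hV : Monotone V) (i : ℕ) : #(keptChunks V i) = i - skipCount V i := by
  induction i with
  | zero => simp [keptChunks]
  | succ k ih =>
    have hmono : skipCount V k ≤ skipCount V (k + 1) := skipCount_mono V (by omega)
    have hstep := skipCount_succ_le hV k
    have hle := skipCount_le_self V k
    rw [keptChunks, ← insert_Icc_right_eq_Icc_add_one (by omega), filter_insert, ← keptChunks,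
      Nat.add_sub_cancel]
    split_ifs with hkeep
    · rw [card_insert_of_notMem fun h => by simpa using (filter_subset _ _ h), ih]
      omega
    · rw [ih]
      omega

theorem prefixBounded_keptChunks (hV : Monotone V) (i : ℕ) : PrefixBounded (keptChunks V i) V :=
  fun j hj => by
    rw [filter_keptChunks (mem_Icc.1 (mem_filter.1 hj).1).2, card_keptChunks hV]
    have := sub_le_skipCount V j
    omega

theorem card_filter_le_sub_skipCount {S : Finset ℕ} (hS : 0 ∉ S)
    (hV : ∀ j, #(S.filter (· ≤ j)) ≤ V j) (i : ℕ) :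
    #(S.filter (· ≤ i)) ≤ i - skipCount V i := by
  have hi : #(S.filter (· ≤ i)) ≤ i := by
    have := S.card_filter_le_le_add_sub (i := i) (j := 0)
    rwa [filter_false_of_mem fun k hk hk0 => hS (Nat.le_zero.1 hk0 ▸ hk), card_empty,
      zero_add, Nat.sub_zero] at this
  suffices skipCount V i ≤ i - #(S.filter (· ≤ i)) by omega
  refine Finset.sup_le fun j hj => ?_
  have := S.card_filter_le_le_add_sub (i := i) (j := j)
  have := hV j
  have := (mem_Icc.1 hj).2
  omega

end SkipCount

theorem Finset.sum_Icc_one_sub {M : Type*} [AddCommGroup M] (f : ℕ → M) (n : ℕ) :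
    ∑ t ∈ Icc 1 n, (f t - f (t - 1)) = f n - f 0 := by
  induction n with
  | zero => simp
  | succ n ih =>
    rw [sum_Icc_succ_top (by omega), ih, Nat.add_sub_cancel]
    abel

section LinkSchedule

variable {Y η : ℝ} {d : ℕ → ℕ} {B : ℕ → ℝ}

theorem cumBW_zero (B : ℕ → ℝ) : cumBW B 0 = 0 := by
  simp [cumBW]

theorem cumBW_mono (hB : ∀ j, 1 ≤ j → 0 ≤ B j) : Monotone (cumBW B) :=
  fun _ _ h => sum_le_sum_of_subset_of_nonneg (Icc_subset_Icc_right h)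
    fun j hj _ => hB j (mem_Icc.1 hj).1

theorem cumBW_nonneg (hB : ∀ j, 1 ≤ j → 0 ≤ B j) (t : ℕ) : 0 ≤ cumBW B t :=
  cumBW_zero B ▸ cumBW_mono hB (Nat.zero_le t)

theorem cumBW_sub_one_add {t : ℕ} (ht : 1 ≤ t) : cumBW B (t - 1) + B t = cumBW B t := by
  obtain ⟨s, rfl⟩ := Nat.exists_eq_add_of_le' ht
  rw [cumBW, cumBW, Nat.add_sub_cancel, sum_Icc_succ_top (by omega)]

noncomputable def linkCap (Y : ℝ) (d : ℕ → ℕ) (B : ℕ → ℝ) (η : ℝ) (j : ℕ) : ℕ :=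
  ⌊min η (cumBW B (d j)) / Y⌋₊

theorem Vval_eq_sum_linkCap (U : ℕ) (Y : ℝ) (d : ℕ → ℕ) (B : Fin U → ℕ → ℝ) (η : Fin U → ℝ)
    (j : ℕ) : Vval U Y d B η j = ∑ u, linkCap Y d (B u) (η u) j :=
  rfl

theorem le_linkCap_iff (hY : 0 < Y) {k j : ℕ} (hk : k ≠ 0) :
    k ≤ linkCap Y d B η j ↔ k * Y ≤ η ∧ k * Y ≤ cumBW B (d j) := by
  rw [linkCap, Nat.le_floor_iff' hk, le_div_iff₀ hY, le_min_iff]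

/-- `FeasibleAssignment` for a single link carrying the chunks of `T`. -/
structure IsLinkSchedule (Y : ℝ) (d : ℕ → ℕ) (B : ℕ → ℝ) (η : ℝ) (T : Finset ℕ)
    (z : ℕ → ℕ → ℝ) : Prop where
  nonneg : ∀ i ∈ T, ∀ j, 0 ≤ z i j
  sum_eq : ∀ i ∈ T, ∑ j ∈ Icc 1 (d i), z i j = Y
  eq_zero : ∀ i ∈ T, ∀ j, (j < 1 ∨ d i < j) → z i j = 0
  sum_le_bandwidth : ∀ j, 1 ≤ j → ∑ i ∈ T, z i j ≤ B j
  total_le : ∑ i ∈ T, ∑ j ∈ Icc 1 (d i), z i j ≤ η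

theorem IsLinkSchedule.card_filter_le_linkCap {T : Finset ℕ} {z : ℕ → ℕ → ℝ} (hY : 0 < Y)
    (hd : Monotone d) (h : IsLinkSchedule Y d B η T z) (j : ℕ) :
    #(T.filter (· ≤ j)) ≤ linkCap Y d B η j := by
  set P := T.filter (· ≤ j)
  have hPT : P ⊆ T := filter_subset _ T
  have hP : #P * Y = ∑ i ∈ P, ∑ t ∈ Icc 1 (d i), z i t := by
    rw [sum_congr rfl fun i hi => h.sum_eq i (hPT hi), sum_const, nsmul_eq_mul]
  have hη : #P * Y ≤ η := hP ▸ (sum_le_sum_of_subset_of_nonneg hPT fun i hi _ =>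
    sum_nonneg fun t _ => h.nonneg i hi t).trans h.total_le
  -- every chunk of `P` is downloaded by `d j`, hence within the first `d j` slots
  have hR : #P * Y ≤ cumBW B (d j) := calc
    #P * Y = ∑ i ∈ P, ∑ t ∈ Icc 1 (d j), z i t := by
      refine hP.trans (sum_congr rfl fun i hi => sum_subset (Icc_subset_Icc_right ?_) ?_)
      · exact hd (mem_filter.1 hi).2
      · intro t ht ht'
        exact h.eq_zero i (hPT hi) t (by simp only [mem_Icc] at ht ht'; omega)
    _ = ∑ t ∈ Icc 1 (d j), ∑ i ∈ P, z i t := sum_comm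
    _ ≤ cumBW B (d j) := sum_le_sum fun t ht =>
      (sum_le_sum_of_subset_of_nonneg hPT fun i hi _ => h.nonneg i hi t).trans
        (h.sum_le_bandwidth t (mem_Icc.1 ht).1)
  exact Nat.le_floor ((le_div_iff₀ hY).2 (le_min hη hR))

/-- The part of `[s Y, (s + 1) Y]` below `x`: serving the chunks of a link one after another,
the chunk with `s` predecessors has received this much once the cumulative bandwidth is `x`. -/
noncomputable def waterFill (Y : ℝ) (s : ℕ) (x : ℝ) : ℝ :=
  min (((s + 1 : ℕ) : ℝ) * Y) x - min ((s : ℝ) * Y) x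

theorem waterFill_mono (hY : 0 ≤ Y) (s : ℕ) : Monotone (waterFill Y s) := by
  intro x x' hx
  have : (s : ℝ) * Y ≤ ((s + 1 : ℕ) : ℝ) * Y := by gcongr; omega
  simp only [waterFill, min_def]
  split_ifs <;> linarith

theorem waterFill_zero (hY : 0 ≤ Y) (s : ℕ) : waterFill Y s 0 = 0 := by
  rw [waterFill, min_eq_right (by positivity), min_eq_right (by positivity), sub_self]

theorem waterFill_of_le (hY : 0 ≤ Y) {s : ℕ} {x : ℝ} (hx : ((s + 1 : ℕ) : ℝ) * Y ≤ x) :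
    waterFill Y s x = Y := by
  have : (s : ℝ) * Y ≤ ((s + 1 : ℕ) : ℝ) * Y := by gcongr; omega
  rw [waterFill, min_eq_left hx, min_eq_left (this.trans hx)]
  push_cast
  ring

theorem sum_range_waterFill (n : ℕ) {x : ℝ} (hx : 0 ≤ x) :
    ∑ s ∈ range n, waterFill Y s x = min (n * Y) x :=
  (sum_range_sub (fun k : ℕ => min ((k : ℝ) * Y) x) n).trans (by simp [hx])

theorem exists_isLinkSchedule (hY : 0 < Y) (hB : ∀ j, 1 ≤ j → 0 ≤ B j) (hη : 0 ≤ η)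
    {T : Finset ℕ} (hT : PrefixBounded T (linkCap Y d B η)) :
    ∃ z, IsLinkSchedule Y d B η T z := by
  have hR := cumBW_mono hB
  have hdone : ∀ i ∈ T, ((#(T.filter (· < i)) + 1 : ℕ) : ℝ) * Y ≤ cumBW B (d i) := by
    intro i hi
    have := hT i hi
    rw [card_filter_le_eq_card_filter_lt_add_one hi] at this
    exact ((le_linkCap_iff hY (by omega)).1 this).2
  set z : ℕ → ℕ → ℝ := fun i t =>
    waterFill Y #(T.filter (· < i)) (cumBW B t) - waterFill Y #(T.filter (· < i)) (cumBW B (t - 1))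
  have hsum : ∀ i ∈ T, ∑ t ∈ Icc 1 (d i), z i t = Y := by
    intro i hi
    rw [sum_Icc_one_sub (fun t => waterFill Y #(T.filter (· < i)) (cumBW B t)),
      waterFill_of_le hY.le (hdone i hi), cumBW_zero, waterFill_zero hY.le, sub_zero]
  refine ⟨z, fun i _ t => sub_nonneg.2 (waterFill_mono hY.le _ (hR (Nat.sub_le t 1))), hsum,
    fun i hi t ht => ?_, fun t ht => ?_, ?_⟩
  · rcases ht with ht | ht
    · obtain rfl : t = 0 := by omega
      exact sub_self _
    · rw [sub_eq_zero, waterFill_of_le hY.le ((hdone i hi).trans (hR ht.le)),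
        waterFill_of_le hY.le ((hdone i hi).trans (hR (by omega)))]
  · have hBt : cumBW B (t - 1) + B t = cumBW B t := cumBW_sub_one_add ht
    have hmono := hR (Nat.sub_le t 1)
    -- the ranks telescope to `min (#T * Y) (R t) - min (#T * Y) (R (t - 1)) ≤ R t - R (t - 1)`
    rw [sum_sub_distrib, sum_card_filter_lt T fun s => waterFill Y s (cumBW B t),
      sum_card_filter_lt T fun s => waterFill Y s (cumBW B (t - 1)),
      sum_range_waterFill _ (cumBW_nonneg hB t), sum_range_waterFill _ (cumBW_nonneg hB _)]
    simp only [min_def]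
    split_ifs <;> linarith
  · rw [sum_congr rfl hsum, sum_const, nsmul_eq_mul]
    rcases T.eq_empty_or_nonempty with rfl | hne
    · simpa using hη
    · have := hT _ (max'_mem T hne)
      rw [filter_true_of_mem fun x hx => le_max' T x hx] at this
      exact ((le_linkCap_iff hY (card_ne_zero.2 hne)).1 this).1

end LinkSchedule

section Assignment

variable {U : ℕ} {Y : ℝ} {d : ℕ → ℕ} {B : Fin U → ℕ → ℝ} {η : Fin U → ℝ}

theorem feasibleAssignment_iff {S : Finset ℕ} :
    FeasibleAssignment U Y d B η S ↔
      ∃ ℓ : ℕ → Fin U, ∀ u, ∃ z, IsLinkSchedule Y d (B u) (η u) (S.filter (ℓ · = u)) z := by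
  constructor
  · rintro ⟨ℓ, z, hnonneg, hsum, hzero, hslot, htotal⟩
    exact ⟨ℓ, fun u => ⟨z, fun i hi => hnonneg i (mem_filter.1 hi).1,
      fun i hi => hsum i (mem_filter.1 hi).1, fun i hi => hzero i (mem_filter.1 hi).1,
      hslot u, htotal u⟩⟩
  · rintro ⟨ℓ, hℓ⟩
    choose z hz using hℓ
    have hmem : ∀ i ∈ S, i ∈ S.filter (ℓ · = ℓ i) := fun i hi => mem_filter.2 ⟨hi, rfl⟩
    refine ⟨ℓ, fun i => z (ℓ i) i, fun i hi => (hz _).nonneg i (hmem i hi),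
      fun i hi => (hz _).sum_eq i (hmem i hi), fun i hi => (hz _).eq_zero i (hmem i hi),
      fun u j hj => ?_, fun u => ?_⟩
    · exact (sum_congr rfl fun i hi => by simp only [(mem_filter.1 hi).2]).trans_le
        ((hz u).sum_le_bandwidth j hj)
    · exact (sum_congr rfl fun i hi => by simp only [(mem_filter.1 hi).2]).trans_le (hz u).total_le

theorem FeasibleAssignment.card_filter_le_Vval {S : Finset ℕ} (hY : 0 < Y) (hd : Monotone d)
    (h : FeasibleAssignment U Y d B η S) (j : ℕ) : #(S.filter (· ≤ j)) ≤ Vval U Y d B η j := by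
  obtain ⟨ℓ, hℓ⟩ := feasibleAssignment_iff.1 h
  rw [card_eq_sum_card_fiberwise fun x _ => mem_univ (ℓ x), Vval_eq_sum_linkCap]
  refine sum_le_sum fun u _ => ?_
  obtain ⟨z, hz⟩ := hℓ u
  rw [filter_comm]
  exact hz.card_filter_le_linkCap hY hd j

theorem feasibleAssignment_of_prefixBounded (hU : 0 < U) (hY : 0 < Y)
    (hB : ∀ u j, 1 ≤ j → 0 ≤ B u j) (hη : ∀ u, 0 ≤ η u) {S : Finset ℕ}
    (hS : PrefixBounded S (Vval U Y d B η)) : FeasibleAssignment U Y d B η S := by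
  have : Nonempty (Fin U) := Fin.pos_iff_nonempty.1 hU
  obtain ⟨ℓ, hℓ⟩ := PrefixBounded.exists_fiberwise (c := fun u => linkCap Y d (B u) (η u)) hS
  exact feasibleAssignment_iff.2 ⟨ℓ, fun u => exists_isLinkSchedule hY (hB u) (hη u) (hℓ u)⟩

theorem Vval_mono (hY : 0 ≤ Y) (hd : Monotone d) (hB : ∀ u j, 1 ≤ j → 0 ≤ B u j) :
    Monotone (Vval U Y d B η) := fun _ _ h =>
  sum_le_sum fun u _ => Nat.floor_mono <| by gcongr; exact cumBW_mono (hB u) (hd h)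

end Assignment

/-- For each `i ∈ {1,…,C}`, the maximum number of chunks among the first `i`
that a feasible set can fetch equals `i − max_{1≤j≤i} max(0, j − V(j))`. -/
theorem max_prefix_fetch_eq
    (C U : ℕ) (hU : 1 ≤ U) (Y : ℝ) (hY : 0 < Y)
    (d : ℕ → ℕ) (hd : Monotone d)
    (B : Fin U → ℕ → ℝ) (hB : ∀ u j, 1 ≤ j → 0 ≤ B u j)
    (η : Fin U → ℝ) (hη : ∀ u, 0 ≤ η u) :
    ∀ i ∈ Finset.Icc 1 C,
      IsGreatest
        {m : ℕ | ∃ S, S ⊆ Finset.Icc 1 C ∧ FeasibleAssignment U Y d B η S ∧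
          m = (S.filter (fun k => k ≤ i)).card}
        (i - (Finset.Icc 1 i).sup (fun j => j - Vval U Y d B η j)) := by
  intro i hi
  have hV := Vval_mono (η := η) hY.le hd hB
  refine ⟨⟨keptChunks (Vval U Y d B η) i, ?_, ?_, ?_⟩, ?_⟩
  · exact (filter_subset _ _).trans (Icc_subset_Icc_right (mem_Icc.1 hi).2)
  · exact feasibleAssignment_of_prefixBounded hU hY hB hη (prefixBounded_keptChunks hV i)
  · rw [filter_keptChunks le_rfl, card_keptChunks hV]
    rfl
  · rintro _ ⟨S, hSC, hS, rfl⟩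
    exact card_filter_le_sub_skipCount (fun h0 => by simpa using hSC h0)
      (hS.card_filter_le_Vval hY hd) i
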